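/- For every c ∈ ℂ, the assignment [z₁:z₂] ↦ [z₁² + 2c·z₁z₂ : 2c̄·z₁z₂ − z₂²] defines a map p'_c : ℙ¹(ℂ) → ℙ¹(ℂ) (i.e., the two coordinate quadratics never vanish simultaneously at any (z₁, z₂) ≠ (0,0)); every fiber of p'_c has cardinality 1 or 2; exactly two points of ℙ¹(ℂ) have a singleton fiber; consequently, for every subset P ⊆ ℙ¹(ℂ) with #P ≥ 3, the preimage (p'_c)⁻¹(P) has at least 4 elements. -/

import Mathlib

/-!
Every fibre of `p'_c` over `q = [w₁ : w₂]` is the zero locus in `ℙ¹` of the binary quadratic form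
`w₂ z₁² + (2c w₂ - 2c̄ w₁) z₁z₂ + w₁ z₂²`, which is nonzero. Over an algebraically closed field a
nonzero binary quadratic form splits into two linear factors, so its zero locus has one or two
points, and one exactly when its discriminant vanishes. That discriminant is, up to the factor 4,
again a binary quadratic form in `(w₁, w₂)`, whose own discriminant `1 + 4|c|²` is nonzero: hence
exactly two points have a singleton fibre. Three points of `P` contribute at least
`2 · 3 - 2 = 4` preimages.
-/

noncomputable section

/-- The pair of coordinate quadratics `(z₁² + 2c·z₁z₂, 2c̄·z₁z₂ − z₂²)` defining the
map `p'_c` on homogeneous coordinates. -/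
def Fc (c : ℂ) (v : Fin 2 → ℂ) : Fin 2 → ℂ :=
  ![v 0 ^ 2 + 2 * c * (v 0 * v 1), 2 * (starRingEnd ℂ) c * (v 0 * v 1) - v 1 ^ 2]

open Projectivization
open scoped LinearAlgebra.Projectivization

section ProjectiveLine

variable {K : Type*} [Field K]

lemma fin_two_ne_zero_iff {v : Fin 2 → K} : v ≠ 0 ↔ v 0 ≠ 0 ∨ v 1 ≠ 0 := by
  simp only [ne_eq, funext_iff, Fin.forall_fin_two, Pi.zero_apply, not_and_or]

lemma mk_eq_mk_iff_mul_eq_mul {v w : Fin 2 → K} (hv : v ≠ 0) (hw : w ≠ 0) :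
    mk K v hv = mk K w hw ↔ v 0 * w 1 = v 1 * w 0 := by
  rw [mk_eq_mk_iff']
  constructor
  · rintro ⟨a, rfl⟩
    simp only [Pi.smul_apply, smul_eq_mul]
    ring
  · intro h
    by_cases hw0 : w 0 = 0
    · have hw1 : w 1 ≠ 0 := (fin_two_ne_zero_iff.mp hw).resolve_left (not_not.mpr hw0)
      have hv0 : v 0 = 0 := by simpa [hw0, hw1] using h
      exact ⟨v 1 / w 1, funext_iff.2 <| Fin.forall_fin_two.2 ⟨by simp [hw0, hv0], by simp [hw1]⟩⟩
    · refine ⟨v 0 / w 0, funext_iff.2 <| Fin.forall_fin_two.2 ⟨?_, ?_⟩⟩ <;>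
        simp only [Pi.smul_apply, smul_eq_mul] <;> field_simp
      linear_combination h

end ProjectiveLine

section BinaryQuadraticForm

variable {K : Type*} [Field K] [IsAlgClosed K]

lemma exists_binaryQuadratic_eq_mul (A B C : K) :
    ∃ a₁ b₁ a₂ b₂ : K, A = a₁ * a₂ ∧ B = a₁ * b₂ + a₂ * b₁ ∧ C = b₁ * b₂ := by
  by_cases hA : A = 0
  · exact ⟨0, 1, B, C, by simp [hA]⟩
  obtain ⟨r, hr⟩ := IsAlgClosed.exists_root
    (Polynomial.C A * Polynomial.X ^ 2 + Polynomial.C B * Polynomial.X + Polynomial.C C)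
    (by rw [Polynomial.degree_quadratic hA]; decide)
  simp only [Polynomial.IsRoot, Polynomial.eval_add, Polynomial.eval_mul, Polynomial.eval_C,
    Polynomial.eval_pow, Polynomial.eval_X] at hr
  exact ⟨1, -r, A, B + A * r, by ring, by ring, by linear_combination hr⟩

theorem ncard_eq_one_or_two_and_ncard_eq_one_iff_discrim {A B C : K}
    (hABC : ¬(A = 0 ∧ B = 0 ∧ C = 0)) {S : Set (ℙ K (Fin 2 → K))}
    (hS : ∀ v (hv : v ≠ 0), mk K v hv ∈ S ↔ A * v 0 ^ 2 + B * (v 0 * v 1) + C * v 1 ^ 2 = 0) :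
    (S.ncard = 1 ∨ S.ncard = 2) ∧ (S.ncard = 1 ↔ discrim A B C = 0) := by
  obtain ⟨a₁, b₁, a₂, b₂, rfl, rfl, rfl⟩ := exists_binaryQuadratic_eq_mul A B C
  have h₁ : ![-b₁, a₁] ≠ 0 := by
    rw [fin_two_ne_zero_iff]; contrapose! hABC; simp_all
  have h₂ : ![-b₂, a₂] ≠ 0 := by
    rw [fin_two_ne_zero_iff]; contrapose! hABC; simp_all
  have hS' : S = {mk K ![-b₁, a₁] h₁, mk K ![-b₂, a₂] h₂} := by
    ext p
    induction p with | h v hv => ?_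
    rw [hS, Set.mem_insert_iff, Set.mem_singleton_iff, mk_eq_mk_iff_mul_eq_mul,
      mk_eq_mk_iff_mul_eq_mul]
    simp only [Matrix.cons_val_zero, Matrix.cons_val_one, Matrix.cons_val_fin_one]
    rw [show ∀ x y : K, (a₁ * a₂) * x ^ 2 + (a₁ * b₂ + a₂ * b₁) * (x * y) + (b₁ * b₂) * y ^ 2
        = (a₁ * x + b₁ * y) * (a₂ * x + b₂ * y) from fun x y => by ring, mul_eq_zero]
    apply or_congr <;> constructor <;> intro h <;> linear_combination h
  have hdisc : discrim (a₁ * a₂) (a₁ * b₂ + a₂ * b₁) (b₁ * b₂) = (a₁ * b₂ - a₂ * b₁) ^ 2 := by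
    rw [discrim]; ring
  have hsame : mk K ![-b₁, a₁] h₁ = mk K ![-b₂, a₂] h₂ ↔ a₁ * b₂ - a₂ * b₁ = 0 := by
    rw [mk_eq_mk_iff_mul_eq_mul]
    simp only [Matrix.cons_val_zero, Matrix.cons_val_one, Matrix.cons_val_fin_one]
    constructor <;> intro h <;> linear_combination h
  rw [hS', hdisc, pow_eq_zero_iff two_ne_zero, ← hsame]
  by_cases h : mk K ![-b₁, a₁] h₁ = mk K ![-b₂, a₂] h₂
  · simp [h]
  · simp [Set.ncard_pair h, h]

end BinaryQuadraticForm

section FiberCounting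

variable {α β : Type*} (f : α → β)

lemma finite_preimage_singleton_of_ncard_eq_one_or_two
    (hfib : ∀ b, (f ⁻¹' {b}).ncard = 1 ∨ (f ⁻¹' {b}).ncard = 2) (b : β) :
    (f ⁻¹' {b}).Finite :=
  Set.finite_of_ncard_ne_zero (by rcases hfib b with h | h <;> simp [h])

lemma ncard_preimage_finset_eq_sum {t : Finset β} (ht : ∀ b ∈ t, (f ⁻¹' {b}).Finite) :
    (f ⁻¹' ↑t).ncard = ∑ b ∈ t, (f ⁻¹' {b}).ncard :=
  Finset.card_preimage_eq_sum_card_image_eq ht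

lemma two_mul_card_le_ncard_preimage_add
    (hfib : ∀ b, (f ⁻¹' {b}).ncard = 1 ∨ (f ⁻¹' {b}).ncard = 2)
    (hS : {b | (f ⁻¹' {b}).ncard = 1}.Finite) (t : Finset β) :
    2 * t.card ≤ (f ⁻¹' ↑t).ncard + {b | (f ⁻¹' {b}).ncard = 1}.ncard := by
  classical
  rw [ncard_preimage_finset_eq_sum f fun b _ =>
    finite_preimage_singleton_of_ncard_eq_one_or_two f hfib b]
  calc 2 * t.card = ∑ b ∈ t, 2 := by simp [mul_comm]
    _ ≤ ∑ b ∈ t, ((f ⁻¹' {b}).ncard + if (f ⁻¹' {b}).ncard = 1 then 1 else 0) :=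
      Finset.sum_le_sum fun b _ => by rcases hfib b with h | h <;> simp [h]
    _ = ∑ b ∈ t, (f ⁻¹' {b}).ncard + (t.filter fun b => (f ⁻¹' {b}).ncard = 1).card := by
      rw [Finset.sum_add_distrib, Finset.sum_boole, Nat.cast_id]
    _ ≤ _ := by
      gcongr
      rw [← Set.ncard_coe_finset]
      exact Set.ncard_le_ncard (fun b hb => (Finset.mem_filter.mp hb).2) hS

lemma four_le_ncard_preimage (hfib : ∀ b, (f ⁻¹' {b}).ncard = 1 ∨ (f ⁻¹' {b}).ncard = 2)
    (hS : {b | (f ⁻¹' {b}).ncard = 1}.ncard = 2) {P : Set β} (hP : 3 ≤ P.ncard) :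
    4 ≤ (f ⁻¹' P).ncard := by
  obtain ⟨T, hTP, hT⟩ := Set.exists_subset_card_eq hP
  obtain ⟨t, rfl⟩ := (Set.finite_of_ncard_pos (by omega : 0 < T.ncard)).exists_finset_coe
  have hPfin : (f ⁻¹' P).Finite := (Set.finite_of_ncard_pos (by omega)).preimage' fun b _ =>
    finite_preimage_singleton_of_ncard_eq_one_or_two f hfib b
  have hcount := two_mul_card_le_ncard_preimage_add f hfib
    (Set.finite_of_ncard_ne_zero (by omega)) t
  have hmono := Set.ncard_le_ncard (Set.preimage_mono hTP) hPfin
  rw [Set.ncard_coe_finset] at hT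
  omega

end FiberCounting

section QuadraticMap

open ComplexConjugate

lemma one_add_mul_mul_conj_ne_zero {r : ℝ} (hr : 0 ≤ r) (c : ℂ) : 1 + r * (c * conj c) ≠ 0 := by
  rw [Complex.mul_conj]
  norm_cast
  have := Complex.normSq_nonneg c
  positivity

lemma Fc_ne_zero (c : ℂ) {v : Fin 2 → ℂ} (hv : v ≠ 0) : Fc c v ≠ 0 := by
  intro hF
  have h₀ : v 0 ^ 2 + 2 * c * (v 0 * v 1) = 0 := congrFun hF 0
  have h₁ : 2 * conj c * (v 0 * v 1) - v 1 ^ 2 = 0 := congrFun hF 1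
  have hprod : v 0 * v 1 = 0 := by
    have : (1 + (4 : ℝ) * (c * conj c)) * (v 0 * v 1) ^ 2 = 0 := by
      push_cast
      linear_combination v 1 ^ 2 * h₀ + 2 * c * (v 0 * v 1) * h₁
    exact pow_eq_zero_iff two_ne_zero |>.mp <| (mul_eq_zero.mp this).resolve_left <|
      one_add_mul_mul_conj_ne_zero (by norm_num) c
  rw [hprod] at h₀ h₁
  exact hv (funext_iff.2 <| Fin.forall_fin_two.2
    ⟨pow_eq_zero_iff two_ne_zero |>.mp (by linear_combination h₀),
      pow_eq_zero_iff two_ne_zero |>.mp (by linear_combination -h₁)⟩)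

lemma mk_Fc_eq_mk_iff (c : ℂ) {v w : Fin 2 → ℂ} (hv : v ≠ 0) (hw : w ≠ 0) :
    mk ℂ (Fc c v) (Fc_ne_zero c hv) = mk ℂ w hw ↔
      w 1 * v 0 ^ 2 + (2 * c * w 1 - 2 * conj c * w 0) * (v 0 * v 1) + w 0 * v 1 ^ 2 = 0 := by
  rw [mk_eq_mk_iff_mul_eq_mul]
  simp only [Fc, Matrix.cons_val_zero, Matrix.cons_val_one, Matrix.cons_val_fin_one]
  constructor <;> intro h <;> linear_combination h

variable {c : ℂ} {pc : ℙ ℂ (Fin 2 → ℂ) → ℙ ℂ (Fin 2 → ℂ)}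
  (hpc : ∀ (v : Fin 2 → ℂ) (hv : v ≠ 0) (hFv : Fc c v ≠ 0),
    pc (mk ℂ v hv) = mk ℂ (Fc c v) hFv)
include hpc

lemma ncard_preimage_singleton_mk {w : Fin 2 → ℂ} (hw : w ≠ 0) :
    ((pc ⁻¹' {mk ℂ w hw}).ncard = 1 ∨ (pc ⁻¹' {mk ℂ w hw}).ncard = 2) ∧
      ((pc ⁻¹' {mk ℂ w hw}).ncard = 1 ↔
        conj c ^ 2 * w 0 ^ 2 + -(2 * (c * conj c) + 1) * (w 0 * w 1) + c ^ 2 * w 1 ^ 2 = 0) := by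
  have hcoeff : ¬(w 1 = 0 ∧ 2 * c * w 1 - 2 * conj c * w 0 = 0 ∧ w 0 = 0) := fun h =>
    (fin_two_ne_zero_iff.mp hw).elim (· h.2.2) (· h.1)
  obtain ⟨hcard, hone⟩ := ncard_eq_one_or_two_and_ncard_eq_one_iff_discrim hcoeff
    (S := pc ⁻¹' {mk ℂ w hw}) fun v hv => by
      rw [Set.mem_preimage, Set.mem_singleton_iff, hpc v hv (Fc_ne_zero c hv),
        mk_Fc_eq_mk_iff c hv hw]
  refine ⟨hcard, hone.trans ?_⟩
  rw [discrim]
  constructor <;> intro h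
  · linear_combination h / 4
  · linear_combination 4 * h

lemma ncard_setOf_ncard_preimage_singleton_eq_one : {q | (pc ⁻¹' {q}).ncard = 1}.ncard = 2 := by
  have hB : -(2 * (c * conj c) + 1) ≠ 0 := by
    rw [neg_ne_zero, add_comm]
    exact_mod_cast one_add_mul_mul_conj_ne_zero (by norm_num : (0 : ℝ) ≤ 2) c
  obtain ⟨hcard, hone⟩ := ncard_eq_one_or_two_and_ncard_eq_one_iff_discrim
    (fun h => hB h.2.1) (S := {q | (pc ⁻¹' {q}).ncard = 1}) fun _ hw =>
      (ncard_preimage_singleton_mk hpc hw).2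
  refine hcard.resolve_left fun h => one_add_mul_mul_conj_ne_zero (by norm_num : (0 : ℝ) ≤ 4) c ?_
  have hdisc := hone.mp h
  rw [discrim] at hdisc
  push_cast
  linear_combination hdisc

end QuadraticMap

/-- For every `c ∈ ℂ`: the two coordinate quadratics of `p'_c` never vanish
simultaneously on `(z₁, z₂) ≠ 0`, so `[z₁:z₂] ↦ [z₁² + 2c·z₁z₂ : 2c̄·z₁z₂ − z₂²]` defines a
map `p'_c : ℙ¹(ℂ) → ℙ¹(ℂ)`; every fiber of `p'_c` has cardinality 1 or 2; exactly two points
of `ℙ¹(ℂ)` have a singleton fiber; and consequently every subset `P ⊆ ℙ¹(ℂ)` with `#P ≥ 3`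
has `#(p'_c)⁻¹(P) ≥ 4`. -/
theorem stmt13 (c : ℂ) :
    (∀ v : Fin 2 → ℂ, v ≠ 0 → Fc c v ≠ 0) ∧
    ∀ pc : Projectivization ℂ (Fin 2 → ℂ) → Projectivization ℂ (Fin 2 → ℂ),
      (∀ (v : Fin 2 → ℂ) (hv : v ≠ 0) (hFv : Fc c v ≠ 0),
          pc (Projectivization.mk ℂ v hv) = Projectivization.mk ℂ (Fc c v) hFv) →
      (∀ q, (pc ⁻¹' {q}).ncard = 1 ∨ (pc ⁻¹' {q}).ncard = 2) ∧
      ({q : Projectivization ℂ (Fin 2 → ℂ) | (pc ⁻¹' {q}).ncard = 1}.ncard = 2) ∧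
      (∀ P : Set (Projectivization ℂ (Fin 2 → ℂ)), 3 ≤ P.ncard → 4 ≤ (pc ⁻¹' P).ncard) := by
  refine ⟨fun v hv => Fc_ne_zero c hv, fun pc hpc => ?_⟩
  have hfib : ∀ q, (pc ⁻¹' {q}).ncard = 1 ∨ (pc ⁻¹' {q}).ncard = 2 := by
    intro q
    induction q with | h w hw => exact (ncard_preimage_singleton_mk hpc hw).1
  have hsing := ncard_setOf_ncard_preimage_singleton_eq_one hpc
  exact ⟨hfib, hsing, fun P hP => four_le_ncard_preimage pc hfib hsing hP⟩

end
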